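/- arXiv:2505.03578 — 6 statements merged into one kernel-verified Lean document; each statement's English description precedes it below -/
import Mathlib

section
/- Let γ_{jR}, γ_{jL}, γ_{lR}, γ_{lL} ≥ 0 be real numbers, τ_j, τ_l ∈ ℝ, and let f, g : ℝ → ℂ be continuous with compact support. With T_j = T[γ_{jR},γ_{jL},τ_j] and T_l = T[γ_{lR},γ_{lL},τ_l], one has ⟨T_j f, T_l g⟩ = √(γ_{jL}γ_{lL})·∫_ℝ conj(f(t))·g(t+τ_j−τ_l) dt + √(γ_{jR}γ_{lR})·∫_ℝ conj(f(t))·g(t+τ_l−τ_j) dt − √(γ_{jL}γ_{lR})·∫_ℝ conj(f(t))·g(t+τ_j+τ_l) dt − √(γ_{jR}γ_{lL})·∫_ℝ conj(f(t))·g(t−τ_j−τ_l) dt. (This is the rigorous smeared form of the paper's Lemma 2 on the commutator between two distinct delayed noise channels of a semi-infinite waveguide, whose kernel is the corresponding combination of four shifted delta functions.) -/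
open MeasureTheory ComplexConjugate

/-- The L² pairing ⟨f,g⟩ = ∫ conj(f t) · g t dt. -/
noncomputable def pairL2 (f g : ℝ → ℂ) : ℂ := ∫ t : ℝ, conj (f t) * g t

/-- The smeared semi-infinite-waveguide noise channel:
`(T[γR,γL,τ] f)(t) = √γR·f(t+τ) − √γL·f(t−τ)`. -/
noncomputable def Tchan (γR γL τ : ℝ) (f : ℝ → ℂ) : ℝ → ℂ :=
  fun t => (Real.sqrt γR : ℂ) * f (t + τ) - (Real.sqrt γL : ℂ) * f (t - τ)

lemma aux_int (f g : ℝ → ℂ) (hf : Continuous f) (hfc : HasCompactSupport f)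
    (hg : Continuous g) (a b : ℝ) :
    Integrable (fun t : ℝ => conj (f (t + a)) * g (t + b)) := by
  have hcf : Continuous fun t : ℝ => conj (f (t + a)) :=
    Complex.continuous_conj.comp (hf.comp (continuous_id.add continuous_const))
  have hcs : HasCompactSupport fun t : ℝ => f (t + a) :=
    hfc.comp_homeomorph (Homeomorph.addRight a)
  have hcs' : HasCompactSupport fun t : ℝ => conj (f (t + a)) :=
    hcs.comp_left (g := conj) (by simp)
  exact (hcf.mul (hg.comp (continuous_id.add continuous_const))).integrable_of_hasCompactSupport
    hcs'.mul_right

lemma aux_shift (f g : ℝ → ℂ) (a b : ℝ) :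
    (∫ t : ℝ, conj (f (t + a)) * g (t + b)) = ∫ t : ℝ, conj (f t) * g (t + b - a) := by
  rw [← integral_add_right_eq_self (fun t => conj (f t) * g (t + b - a)) a]
  congr 1 with t
  ring_nf

/-- Smeared form of Lemma 2: commutator between two distinct delayed channels of a
semi-infinite waveguide. -/
theorem stmt_1 (γjR γjL γlR γlL : ℝ)
    (hjR : 0 ≤ γjR) (hjL : 0 ≤ γjL) (hlR : 0 ≤ γlR) (hlL : 0 ≤ γlL)
    (τj τl : ℝ)
    (f g : ℝ → ℂ) (hf : Continuous f) (hfc : HasCompactSupport f)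
    (hg : Continuous g) (hgc : HasCompactSupport g) :
    pairL2 (Tchan γjR γjL τj f) (Tchan γlR γlL τl g) =
      ((Real.sqrt (γjL * γlL) : ℝ) : ℂ) * (∫ t : ℝ, conj (f t) * g (t + τj - τl)) +
      ((Real.sqrt (γjR * γlR) : ℝ) : ℂ) * (∫ t : ℝ, conj (f t) * g (t + τl - τj)) -
      ((Real.sqrt (γjL * γlR) : ℝ) : ℂ) * (∫ t : ℝ, conj (f t) * g (t + τj + τl)) -
      ((Real.sqrt (γjR * γlL) : ℝ) : ℂ) * (∫ t : ℝ, conj (f t) * g (t - τj - τl)) := by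
  have hRr := aux_int f g hf hfc hg τj τl
  have hRl := aux_int f g hf hfc hg τj (-τl)
  have hLr := aux_int f g hf hfc hg (-τj) τl
  have hLl := aux_int f g hf hfc hg (-τj) (-τl)
  unfold pairL2 Tchan
  have h1 : (fun t : ℝ => conj ((Real.sqrt γjR : ℂ) * f (t + τj) -
        (Real.sqrt γjL : ℂ) * f (t - τj)) *
        ((Real.sqrt γlR : ℂ) * g (t + τl) - (Real.sqrt γlL : ℂ) * g (t - τl))) =
      fun t : ℝ =>
        ((Real.sqrt γjR : ℂ) * (Real.sqrt γlR : ℂ) * (conj (f (t + τj)) * g (t + τl)) -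
          (Real.sqrt γjR : ℂ) * (Real.sqrt γlL : ℂ) * (conj (f (t + τj)) * g (t + -τl)) -
          (Real.sqrt γjL : ℂ) * (Real.sqrt γlR : ℂ) * (conj (f (t + -τj)) * g (t + τl))) +
        (Real.sqrt γjL : ℂ) * (Real.sqrt γlL : ℂ) * (conj (f (t + -τj)) * g (t + -τl)) := by
    funext t
    simp only [show ∀ s : ℝ, s - τj = s + -τj from fun s => sub_eq_add_neg s τj,
      show ∀ s : ℝ, s - τl = s + -τl from fun s => sub_eq_add_neg s τl,
      map_sub, map_mul, Complex.conj_ofReal]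
    ring
  have I2 : Integrable (fun t : ℝ =>
      (Real.sqrt γjR : ℂ) * (Real.sqrt γlR : ℂ) * (conj (f (t + τj)) * g (t + τl)) -
        (Real.sqrt γjR : ℂ) * (Real.sqrt γlL : ℂ) * (conj (f (t + τj)) * g (t + -τl))) :=
    (hRr.const_mul _).sub (hRl.const_mul _)
  have I3 : Integrable (fun t : ℝ =>
      (Real.sqrt γjR : ℂ) * (Real.sqrt γlR : ℂ) * (conj (f (t + τj)) * g (t + τl)) -
        (Real.sqrt γjR : ℂ) * (Real.sqrt γlL : ℂ) * (conj (f (t + τj)) * g (t + -τl)) -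
        (Real.sqrt γjL : ℂ) * (Real.sqrt γlR : ℂ) * (conj (f (t + -τj)) * g (t + τl))) :=
    I2.sub (hLr.const_mul _)
  rw [h1, integral_add I3 (hLl.const_mul _), integral_sub I2 (hLr.const_mul _),
    integral_sub (hRr.const_mul _) (hRl.const_mul _),
    integral_const_mul, integral_const_mul, integral_const_mul, integral_const_mul,
    aux_shift, aux_shift, aux_shift, aux_shift]
  have e1 : (fun t : ℝ => conj (f t) * g (t + -τl - τj)) =
      fun t : ℝ => conj (f t) * g (t - τj - τl) := by
    funext t; rw [show t + -τl - τj = t - τj - τl by ring]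
  have e2 : (fun t : ℝ => conj (f t) * g (t + τl - -τj)) =
      fun t : ℝ => conj (f t) * g (t + τj + τl) := by
    funext t; rw [show t + τl - -τj = t + τj + τl by ring]
  have e3 : (fun t : ℝ => conj (f t) * g (t + -τl - -τj)) =
      fun t : ℝ => conj (f t) * g (t + τj - τl) := by
    funext t; rw [show t + -τl - -τj = t + τj - τl by ring]
  rw [e1, e2, e3, Real.sqrt_mul hjL γlL, Real.sqrt_mul hjR γlR, Real.sqrt_mul hjL γlR,
    Real.sqrt_mul hjR γlL]
  push_cast
  ring
end

section
/- Let N ≥ 1, let 0 < τ_1 < τ_2 < ... < τ_N be real delays, and let γ_{jR}, γ_{jL} ≥ 0 with γ_{jR} + γ_{jL} > 0 for every j ∈ {1,...,N}. Set T_j = T[γ_{jR},γ_{jL},τ_j]. Then the following are equivalent: (i) for every pair j, l there exists κ_{jl} ∈ ℂ such that ⟨T_j f, T_l g⟩ = κ_{jl}·⟨f,g⟩ for all continuous compactly supported f, g : ℝ → ℂ; (ii) N = 1 and γ_{1R}·γ_{1L} = 0. (This is the paper's Proposition 1: for atoms coupled to a semi-infinite waveguide at distinct positions, the quantum noise commutators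 reduce to the Markovian form κ·δ(t−t') only when there is a single atom coupled only to one propagation direction.) -/
open MeasureTheory ComplexConjugate

namespace Stmt4Aux

noncomputable def B (ε t : ℝ) : ℝ := max 0 (ε - |t|)

lemma B_cont (ε : ℝ) : Continuous (B ε) :=
  continuous_const.max (continuous_const.sub continuous_abs)

lemma B_nonneg (ε t : ℝ) : 0 ≤ B ε t := le_max_left _ _

lemma B_eq_zero {ε t : ℝ} (h : ε ≤ |t|) : B ε t = 0 :=
  max_eq_left (by linarith)

lemma B_hcs (ε : ℝ) : HasCompactSupport (B ε) := by
  apply HasCompactSupport.intro (isCompact_Icc (a := -ε) (b := ε))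
  intro t ht
  simp only [Set.mem_Icc, not_and_or, not_le] at ht
  apply B_eq_zero
  rcases ht with h | h
  · exact le_trans (by linarith [neg_le_abs t]) le_rfl
  · exact le_trans (le_of_lt h) (le_abs_self t)

noncomputable def fC (ε a : ℝ) : ℝ → ℂ := fun t => (B ε (t - a) : ℂ)

lemma fC_cont (ε a : ℝ) : Continuous (fC ε a) :=
  Complex.continuous_ofReal.comp ((B_cont ε).comp (continuous_id.sub continuous_const))

lemma fC_hcs (ε a : ℝ) : HasCompactSupport (fC ε a) := by
  have h1 : HasCompactSupport (fun t : ℝ => (B ε t : ℂ)) :=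
    (B_hcs ε).comp_left (g := Complex.ofReal) (by simp)
  exact h1.comp_homeomorph (Homeomorph.subRight a)

noncomputable def I (ε c : ℝ) : ℝ := ∫ t : ℝ, B ε t * B ε (t + c)

lemma I_integrable (ε c : ℝ) : Integrable (fun t : ℝ => B ε t * B ε (t + c)) := by
  apply Continuous.integrable_of_hasCompactSupport
  · exact (B_cont ε).mul ((B_cont ε).comp (continuous_id.add continuous_const))
  · exact (B_hcs ε).mul_right

lemma I_eq_zero {ε c : ℝ} (h : 2 * ε ≤ |c|) : I ε c = 0 := by
  have : ∀ t : ℝ, B ε t * B ε (t + c) = 0 := by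
    intro t
    rcases le_or_gt ε |t| with ht | ht
    · rw [B_eq_zero ht, zero_mul]
    · have : ε ≤ |t + c| := by
        have h1 : |c| - |t| ≤ |t + c| := by
          have := abs_sub_abs_le_abs_sub c (-t)
          simp only [sub_neg_eq_add, abs_neg, add_comm c t] at this
          linarith
        linarith
      rw [B_eq_zero this, mul_zero]
  simp only [I, this, integral_zero]

lemma I_pos {ε : ℝ} (hε : 0 < ε) : 0 < I ε 0 := by
  rw [I, integral_pos_iff_support_of_nonneg]
  · refine lt_of_lt_of_le ?_ (measure_mono (s := Set.Ioo (-ε) ε) ?_)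
    · rw [Real.volume_Ioo]
      apply ENNReal.ofReal_pos.mpr; linarith
    · intro t ht
      simp only [Set.mem_Ioo] at ht
      have hB : 0 < B ε t := lt_max_of_lt_right (by rw [sub_pos]; exact abs_lt.mpr ⟨ht.1, ht.2⟩)
      simp only [Function.mem_support, add_zero]
      exact ne_of_gt (mul_pos hB hB)
  · intro t
    exact mul_nonneg (B_nonneg ε t) (B_nonneg ε _)
  · exact I_integrable ε 0

lemma sqrt_prod_zero {x y : ℝ} (hx : 0 ≤ x) (hy : 0 ≤ y)
    (h : Real.sqrt x * Real.sqrt y = 0) : x * y = 0 := by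
  rcases mul_eq_zero.mp h with h' | h'
  · rw [(Real.sqrt_eq_zero hx).mp h', zero_mul]
  · rw [(Real.sqrt_eq_zero hy).mp h', mul_zero]

lemma expand (γ1R γ1L τ1 γ2R γ2L τ2 : ℝ) (f g : ℝ → ℂ)
    (hf : Continuous f) (hfc : HasCompactSupport f)
    (hg : Continuous g) (hgc : HasCompactSupport g) :
    pairL2 (Tchan γ1R γ1L τ1 f) (Tchan γ2R γ2L τ2 g)
      = (Real.sqrt γ1R : ℂ) * (Real.sqrt γ2R : ℂ) * (∫ t : ℝ, conj (f t) * g (t + (τ2 - τ1)))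
        - (Real.sqrt γ1R : ℂ) * (Real.sqrt γ2L : ℂ) * (∫ t : ℝ, conj (f t) * g (t + (-τ2 - τ1)))
        - (Real.sqrt γ1L : ℂ) * (Real.sqrt γ2R : ℂ) * (∫ t : ℝ, conj (f t) * g (t + (τ2 + τ1)))
        + (Real.sqrt γ1L : ℂ) * (Real.sqrt γ2L : ℂ) * (∫ t : ℝ, conj (f t) * g (t + (τ1 - τ2))) := by
  have hint : ∀ u v : ℝ, Integrable (fun t : ℝ => conj (f (t + u)) * g (t + v)) := by
    intro u v
    apply Continuous.integrable_of_hasCompactSupport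
    · exact (Complex.continuous_conj.comp (hf.comp (continuous_id.add continuous_const))).mul
        (hg.comp (continuous_id.add continuous_const))
    · have h1 : HasCompactSupport (fun t : ℝ => f (t + u)) :=
        hfc.comp_homeomorph (Homeomorph.addRight u)
      have h2 : HasCompactSupport (fun t : ℝ => conj (f (t + u))) :=
        h1.comp_left (g := (starRingEnd ℂ)) (by simp)
      exact h2.mul_right
  have key : ∀ u v : ℝ, (∫ t : ℝ, conj (f (t + u)) * g (t + v))
      = ∫ t : ℝ, conj (f t) * g (t + (v - u)) := by
    intro u v
    rw [← integral_add_right_eq_self (fun t : ℝ => conj (f t) * g (t + (v - u))) u]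
    congr 1
    funext t
    rw [show t + u + (v - u) = t + v by ring]
  have step1 : pairL2 (Tchan γ1R γ1L τ1 f) (Tchan γ2R γ2L τ2 g)
      = ∫ t : ℝ, ((Real.sqrt γ1R : ℂ) * (Real.sqrt γ2R : ℂ) * (conj (f (t + τ1)) * g (t + τ2))
        - (Real.sqrt γ1R : ℂ) * (Real.sqrt γ2L : ℂ) * (conj (f (t + τ1)) * g (t + -τ2))
        - (Real.sqrt γ1L : ℂ) * (Real.sqrt γ2R : ℂ) * (conj (f (t + -τ1)) * g (t + τ2))
        + (Real.sqrt γ1L : ℂ) * (Real.sqrt γ2L : ℂ) * (conj (f (t + -τ1)) * g (t + -τ2))) := by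
    unfold pairL2 Tchan
    congr 1
    funext t
    simp only [map_sub, map_mul, Complex.conj_ofReal]
    rw [sub_eq_add_neg t τ1, sub_eq_add_neg t τ2]
    ring
  rw [step1]
  have hA : Integrable (fun t : ℝ => (Real.sqrt γ1R : ℂ) * (Real.sqrt γ2R : ℂ) * (conj (f (t + τ1)) * g (t + τ2))) :=
    (hint _ _).const_mul _
  have hB : Integrable (fun t : ℝ => (Real.sqrt γ1R : ℂ) * (Real.sqrt γ2L : ℂ) * (conj (f (t + τ1)) * g (t + -τ2))) :=
    (hint _ _).const_mul _
  have hC : Integrable (fun t : ℝ => (Real.sqrt γ1L : ℂ) * (Real.sqrt γ2R : ℂ) * (conj (f (t + -τ1)) * g (t + τ2))) :=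
    (hint _ _).const_mul _
  have hD : Integrable (fun t : ℝ => (Real.sqrt γ1L : ℂ) * (Real.sqrt γ2L : ℂ) * (conj (f (t + -τ1)) * g (t + -τ2))) :=
    (hint _ _).const_mul _
  have hAB : Integrable (fun t : ℝ => (Real.sqrt γ1R : ℂ) * (Real.sqrt γ2R : ℂ) * (conj (f (t + τ1)) * g (t + τ2))
      - (Real.sqrt γ1R : ℂ) * (Real.sqrt γ2L : ℂ) * (conj (f (t + τ1)) * g (t + -τ2))) := hA.sub hB
  have hABC : Integrable (fun t : ℝ => ((Real.sqrt γ1R : ℂ) * (Real.sqrt γ2R : ℂ) * (conj (f (t + τ1)) * g (t + τ2))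
      - (Real.sqrt γ1R : ℂ) * (Real.sqrt γ2L : ℂ) * (conj (f (t + τ1)) * g (t + -τ2)))
      - (Real.sqrt γ1L : ℂ) * (Real.sqrt γ2R : ℂ) * (conj (f (t + -τ1)) * g (t + τ2))) := hAB.sub hC
  rw [integral_add hABC hD, integral_sub hAB hC, integral_sub hA hB,
    integral_const_mul, integral_const_mul, integral_const_mul, integral_const_mul,
    key, key, key, key,
    show τ2 - -τ1 = τ2 + τ1 by ring, show -τ2 - -τ1 = τ1 - τ2 by ring]

lemma bump_int (ε a c : ℝ) :
    (∫ t : ℝ, conj (fC ε 0 t) * fC ε a (t + c)) = ((I ε (c - a) : ℝ) : ℂ) := by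
  have h1 : (∫ t : ℝ, conj (fC ε 0 t) * fC ε a (t + c))
      = ∫ t : ℝ, ((B ε t * B ε (t + (c - a)) : ℝ) : ℂ) := by
    congr 1
    funext t
    simp only [fC, Complex.conj_ofReal, sub_zero, Complex.ofReal_mul]
    rw [show t + c - a = t + (c - a) by ring]
  rw [h1]
  exact integral_ofReal

lemma bump_pair0 (ε a : ℝ) : pairL2 (fC ε 0) (fC ε a) = ((I ε (-a) : ℝ) : ℂ) := by
  have h1 : pairL2 (fC ε 0) (fC ε a) = ∫ t : ℝ, ((B ε t * B ε (t + -a) : ℝ) : ℂ) := by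
    rw [pairL2]
    congr 1
    funext t
    simp only [fC, Complex.conj_ofReal, sub_zero, Complex.ofReal_mul]
    rw [show t + -a = t - a by ring]
  rw [h1]
  exact integral_ofReal

lemma bump_identity (γ1R γ1L τ1 γ2R γ2L τ2 ε a : ℝ) (κ : ℂ)
    (H : pairL2 (Tchan γ1R γ1L τ1 (fC ε 0)) (Tchan γ2R γ2L τ2 (fC ε a))
      = κ * pairL2 (fC ε 0) (fC ε a))
    (ha : 2 * ε ≤ |a|) :
    Real.sqrt γ1R * Real.sqrt γ2R * I ε (τ2 - τ1 - a)
      - Real.sqrt γ1R * Real.sqrt γ2L * I ε (-τ2 - τ1 - a)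
      - Real.sqrt γ1L * Real.sqrt γ2R * I ε (τ2 + τ1 - a)
      + Real.sqrt γ1L * Real.sqrt γ2L * I ε (τ1 - τ2 - a) = 0 := by
  rw [expand _ _ _ _ _ _ _ _ (fC_cont _ _) (fC_hcs _ _) (fC_cont _ _) (fC_hcs _ _),
    bump_int, bump_int, bump_int, bump_int, bump_pair0,
    I_eq_zero (c := -a) (by rwa [abs_neg]), Complex.ofReal_zero, mul_zero] at H
  have h2 : ((Real.sqrt γ1R * Real.sqrt γ2R * I ε (τ2 - τ1 - a)
      - Real.sqrt γ1R * Real.sqrt γ2L * I ε (-τ2 - τ1 - a)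
      - Real.sqrt γ1L * Real.sqrt γ2R * I ε (τ2 + τ1 - a)
      + Real.sqrt γ1L * Real.sqrt γ2L * I ε (τ1 - τ2 - a) : ℝ) : ℂ) = 0 := by
    push_cast
    linear_combination H
  exact_mod_cast h2

lemma diag (γ1R γ1L τ : ℝ) (hR : 0 ≤ γ1R) (hL : 0 ≤ γ1L) (hτ : 0 < τ) (κ : ℂ)
    (H : ∀ f g : ℝ → ℂ, Continuous f → HasCompactSupport f →
      Continuous g → HasCompactSupport g →
        pairL2 (Tchan γ1R γ1L τ f) (Tchan γ1R γ1L τ g) = κ * pairL2 f g) :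
    γ1R * γ1L = 0 := by
  set ε : ℝ := τ / 2 with hεdef
  have hε : 0 < ε := by simp [hεdef]; linarith
  have hid := bump_identity γ1R γ1L τ γ1R γ1L τ ε (2 * τ) κ
    (H _ _ (fC_cont _ _) (fC_hcs _ _) (fC_cont _ _) (fC_hcs _ _))
    (by rw [le_abs]; left; simp [hεdef]; linarith)
  rw [I_eq_zero (c := τ - τ - 2 * τ) (by rw [le_abs]; right; simp [hεdef]; linarith),
    I_eq_zero (c := -τ - τ - 2 * τ) (by rw [le_abs]; right; simp [hεdef]; linarith),
    show τ + τ - 2 * τ = 0 by ring] at hid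
  have hI0 := I_pos hε
  have hz : Real.sqrt γ1L * Real.sqrt γ1R = 0 := by
    have h' : Real.sqrt γ1L * Real.sqrt γ1R * I ε 0 = 0 := by linarith
    exact (mul_eq_zero.mp h').resolve_right (ne_of_gt hI0)
  rw [mul_comm]
  exact sqrt_prod_zero hL hR hz

lemma offdiag (γ1R γ1L γ2R γ2L τ1 τ2 : ℝ)
    (h1R : 0 ≤ γ1R) (h1L : 0 ≤ γ1L) (h2R : 0 ≤ γ2R) (h2L : 0 ≤ γ2L)
    (hτ1 : 0 < τ1) (h12 : τ1 < τ2) (κ : ℂ)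
    (H : ∀ f g : ℝ → ℂ, Continuous f → HasCompactSupport f →
      Continuous g → HasCompactSupport g →
        pairL2 (Tchan γ1R γ1L τ1 f) (Tchan γ2R γ2L τ2 g) = κ * pairL2 f g) :
    (γ1R + γ1L) * (γ2R + γ2L) = 0 := by
  set ε : ℝ := min τ1 (τ2 - τ1) / 2 with hεdef
  have hε : 0 < ε := by
    have := lt_min hτ1 (by linarith : (0:ℝ) < τ2 - τ1)
    simp [hεdef]; constructor <;> linarith [min_le_left τ1 (τ2 - τ1), min_le_right τ1 (τ2 - τ1)]
  have hε1 : 2 * ε ≤ τ1 := by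
    have := min_le_left τ1 (τ2 - τ1); simp [hεdef]; linarith
  have hε2 : 2 * ε ≤ τ2 - τ1 := by
    have := min_le_right τ1 (τ2 - τ1); simp [hεdef]; linarith
  have hI0 := I_pos hε
  have mk : ∀ a : ℝ, 2 * ε ≤ |a| →
      Real.sqrt γ1R * Real.sqrt γ2R * I ε (τ2 - τ1 - a)
      - Real.sqrt γ1R * Real.sqrt γ2L * I ε (-τ2 - τ1 - a)
      - Real.sqrt γ1L * Real.sqrt γ2R * I ε (τ2 + τ1 - a)
      + Real.sqrt γ1L * Real.sqrt γ2L * I ε (τ1 - τ2 - a) = 0 := fun a ha =>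
    bump_identity γ1R γ1L τ1 γ2R γ2L τ2 ε a κ
      (H _ _ (fC_cont _ _) (fC_hcs _ _) (fC_cont _ _) (fC_hcs _ _)) ha
  -- a = τ2 - τ1 : extract √γ1R √γ2R
  have hRR : γ1R * γ2R = 0 := by
    have hid := mk (τ2 - τ1) (by rw [le_abs]; left; linarith)
    rw [I_eq_zero (c := -τ2 - τ1 - (τ2 - τ1)) (by rw [le_abs]; right; linarith),
      I_eq_zero (c := τ2 + τ1 - (τ2 - τ1)) (by rw [le_abs]; left; linarith),
      I_eq_zero (c := τ1 - τ2 - (τ2 - τ1)) (by rw [le_abs]; right; linarith),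
      show τ2 - τ1 - (τ2 - τ1) = 0 by ring] at hid
    apply sqrt_prod_zero h1R h2R
    have h' : Real.sqrt γ1R * Real.sqrt γ2R * I ε 0 = 0 := by linarith
    exact (mul_eq_zero.mp h').resolve_right (ne_of_gt hI0)
  -- a = -τ2 - τ1 : extract √γ1R √γ2L
  have hRL : γ1R * γ2L = 0 := by
    have hid := mk (-τ2 - τ1) (by rw [le_abs]; right; linarith)
    rw [I_eq_zero (c := τ2 - τ1 - (-τ2 - τ1)) (by rw [le_abs]; left; linarith),
      I_eq_zero (c := τ2 + τ1 - (-τ2 - τ1)) (by rw [le_abs]; left; linarith),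
      I_eq_zero (c := τ1 - τ2 - (-τ2 - τ1)) (by rw [le_abs]; left; linarith),
      show -τ2 - τ1 - (-τ2 - τ1) = 0 by ring] at hid
    apply sqrt_prod_zero h1R h2L
    have h' : Real.sqrt γ1R * Real.sqrt γ2L * I ε 0 = 0 := by linarith
    exact (mul_eq_zero.mp h').resolve_right (ne_of_gt hI0)
  -- a = τ2 + τ1 : extract √γ1L √γ2R
  have hLR : γ1L * γ2R = 0 := by
    have hid := mk (τ2 + τ1) (by rw [le_abs]; left; linarith)
    rw [I_eq_zero (c := τ2 - τ1 - (τ2 + τ1)) (by rw [le_abs]; right; linarith),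
      I_eq_zero (c := -τ2 - τ1 - (τ2 + τ1)) (by rw [le_abs]; right; linarith),
      I_eq_zero (c := τ1 - τ2 - (τ2 + τ1)) (by rw [le_abs]; right; linarith),
      show τ2 + τ1 - (τ2 + τ1) = 0 by ring] at hid
    apply sqrt_prod_zero h1L h2R
    have h' : Real.sqrt γ1L * Real.sqrt γ2R * I ε 0 = 0 := by linarith
    exact (mul_eq_zero.mp h').resolve_right (ne_of_gt hI0)
  -- a = τ1 - τ2 : extract √γ1L √γ2L
  have hLL : γ1L * γ2L = 0 := by
    have hid := mk (τ1 - τ2) (by rw [le_abs]; right; linarith)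
    rw [I_eq_zero (c := τ2 - τ1 - (τ1 - τ2)) (by rw [le_abs]; left; linarith),
      I_eq_zero (c := -τ2 - τ1 - (τ1 - τ2)) (by rw [le_abs]; right; linarith),
      I_eq_zero (c := τ2 + τ1 - (τ1 - τ2)) (by rw [le_abs]; left; linarith),
      show τ1 - τ2 - (τ1 - τ2) = 0 by ring] at hid
    apply sqrt_prod_zero h1L h2L
    have h' : Real.sqrt γ1L * Real.sqrt γ2L * I ε 0 = 0 := by linarith
    exact (mul_eq_zero.mp h').resolve_right (ne_of_gt hI0)
  nlinarith [hRR, hRL, hLR, hLL]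

end Stmt4Aux

open Stmt4Aux
/-- Proposition 1: for atoms coupled to a semi-infinite waveguide at distinct positions
`0 < τ_1 < ⋯ < τ_N`, all the noise commutators are Markovian (constant multiples of
`⟨f,g⟩`) iff there is a single atom coupled to only one propagation direction. -/
theorem stmt_4 (N : ℕ) (hN : 0 < N) (τ γR γL : Fin N → ℝ)
    (hτpos : ∀ j, 0 < τ j) (hτmono : StrictMono τ)
    (hγR : ∀ j, 0 ≤ γR j) (hγL : ∀ j, 0 ≤ γL j)
    (hnz : ∀ j, 0 < γR j + γL j) :
    (∀ j l : Fin N, ∃ κ : ℂ,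
        ∀ f g : ℝ → ℂ, Continuous f → HasCompactSupport f →
          Continuous g → HasCompactSupport g →
            pairL2 (Tchan (γR j) (γL j) (τ j) f) (Tchan (γR l) (γL l) (τ l) g) =
              κ * pairL2 f g)
      ↔ (N = 1 ∧ γR ⟨0, hN⟩ * γL ⟨0, hN⟩ = 0) := by
  constructor
  · intro h
    have hdiag : ∀ j, γR j * γL j = 0 := by
      intro j
      obtain ⟨κ, H⟩ := h j j
      exact diag (γR j) (γL j) (τ j) (hγR j) (hγL j) (hτpos j) κ H
    have hN1 : N = 1 := by
      by_contra hne
      have h2 : 2 ≤ N := by omega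
      set j0 : Fin N := ⟨0, by omega⟩
      set j1 : Fin N := ⟨1, by omega⟩
      have hτ01 : τ j0 < τ j1 := hτmono (by simp [j0, j1, Fin.lt_def])
      obtain ⟨κ, H⟩ := h j0 j1
      have hoff := offdiag (γR j0) (γL j0) (γR j1) (γL j1) (τ j0) (τ j1)
        (hγR j0) (hγL j0) (hγR j1) (hγL j1) (hτpos j0) hτ01 κ H
      nlinarith [hnz j0, hnz j1]
    exact ⟨hN1, hdiag _⟩
  · rintro ⟨rfl, h0⟩
    intro j l
    obtain rfl : j = ⟨0, hN⟩ := Subsingleton.elim _ _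
    obtain rfl : l = ⟨0, hN⟩ := Subsingleton.elim _ _
    set j : Fin 1 := ⟨0, hN⟩ with hjdef
    have hprod : γR j * γL j = 0 := h0
    refine ⟨((γR j + γL j : ℝ) : ℂ), ?_⟩
    intro f g hf hfc hg hgc
    rw [expand _ _ _ _ _ _ f g hf hfc hg hgc, sub_self (τ j)]
    simp only [add_zero]
    have hR2 : (Real.sqrt (γR j) : ℂ) * (Real.sqrt (γR j) : ℂ) = ((γR j : ℝ) : ℂ) := by
      rw [← Complex.ofReal_mul, Real.mul_self_sqrt (hγR j)]
    have hL2 : (Real.sqrt (γL j) : ℂ) * (Real.sqrt (γL j) : ℂ) = ((γL j : ℝ) : ℂ) := by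
      rw [← Complex.ofReal_mul, Real.mul_self_sqrt (hγL j)]
    have hcross : (Real.sqrt (γR j) : ℂ) * (Real.sqrt (γL j) : ℂ) = 0 := by
      rcases mul_eq_zero.mp hprod with h' | h' <;> simp [h']
    have hcross' : (Real.sqrt (γL j) : ℂ) * (Real.sqrt (γR j) : ℂ) = 0 := by
      rw [mul_comm]; exact hcross
    rw [hR2, hL2, hcross, hcross']
    simp only [pairL2]
    push_cast
    ring
end

section
/- Let N ≥ 1, let τ_1, ..., τ_N be pairwise distinct real delays, and let γ_{jR}, γ_{jL} ≥ 0 with γ_{jR} + γ_{jL} > 0 for every j ∈ {1,...,N}. Set C_j = C[γ_{jR},τ_j] and D_j = D[γ_{jL},τ_j]. Then the following are equivalent: (i) for every pair j, l there exist κ_{jl}, κ'_{jl} ∈ ℂ such that ⟨C_j f, C_l g⟩ = κ_{jl}·⟨f,g⟩ and ⟨D_j f, D_l g⟩ = κ'_{jl}·⟨f,g⟩ for all continuous compactly supported f, g : ℝ → ℂ; (ii) N = 1, or N = 2 and γ_{1R}·γ_{2R} = 0 and γ_{1L}·γ_{2L} = 0. (This is the paper's Proposition 2 on when the quantum noise commutators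 of atoms coupled at distinct positions to an infinite waveguide reduce to the Markovian form.) -/
open MeasureTheory ComplexConjugate

/-- Smeared right-propagating channel of an infinite waveguide:
`(C[γ,τ] f)(t) = √γ·f(t+τ)`. -/
noncomputable def Cchan (γ τ : ℝ) (f : ℝ → ℂ) : ℝ → ℂ :=
  fun t => (Real.sqrt γ : ℂ) * f (t + τ)

/-- Smeared left-propagating channel of an infinite waveguide:
`(D[γ,τ] f)(t) = √γ·f(t−τ)`. -/
noncomputable def Dchan (γ τ : ℝ) (f : ℝ → ℂ) : ℝ → ℂ :=
  fun t => (Real.sqrt γ : ℂ) * f (t - τ)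

lemma Dchan_eq_Cchan (γ τ : ℝ) (f : ℝ → ℂ) : Dchan γ τ f = Cchan γ (-τ) f := by
  funext t; simp [Dchan, Cchan, sub_eq_add_neg]

lemma pairC_eq (γ1 γ2 τ1 τ2 : ℝ) (f g : ℝ → ℂ) :
    pairL2 (Cchan γ1 τ1 f) (Cchan γ2 τ2 g)
      = ((Real.sqrt γ1 * Real.sqrt γ2 : ℝ) : ℂ)
          * ∫ t : ℝ, conj (f (t + τ1)) * g (t + τ2) := by
  unfold pairL2 Cchan
  rw [← MeasureTheory.integral_const_mul]
  congr 1; funext t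
  simp only [map_mul, Complex.conj_ofReal]
  push_cast
  ring

lemma pairC_diag (γ τ : ℝ) (hγ : 0 ≤ γ) (f g : ℝ → ℂ) :
    pairL2 (Cchan γ τ f) (Cchan γ τ g) = (γ : ℂ) * pairL2 f g := by
  rw [pairC_eq, Real.mul_self_sqrt hγ]
  congr 1
  exact MeasureTheory.integral_add_right_eq_self (fun s => conj (f s) * g s) τ

lemma pairC_zero (γ1 γ2 τ1 τ2 : ℝ) (h : γ1 = 0 ∨ γ2 = 0) (f g : ℝ → ℂ) :
    pairL2 (Cchan γ1 τ1 f) (Cchan γ2 τ2 g) = 0 := by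
  rw [pairC_eq]
  rcases h with h | h <;> subst h <;> simp

/-- The tent function of half-width `r` centred at `a`, viewed as a complex function. -/
noncomputable def tent (r a : ℝ) : ℝ → ℂ := fun t => ((max 0 (r - |t - a|) : ℝ) : ℂ)

lemma tent_continuous (r a : ℝ) : Continuous (tent r a) := by
  unfold tent; fun_prop

lemma tent_eq_zero {r a t : ℝ} (h : r ≤ |t - a|) : tent r a t = 0 := by
  simp only [tent, Complex.ofReal_eq_zero]
  exact max_eq_left (by linarith)

lemma tent_compactSupport (r a : ℝ) : HasCompactSupport (tent r a) := by
  apply HasCompactSupport.intro (isCompact_Icc (a := a - r) (b := a + r))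
  intro t ht
  apply tent_eq_zero
  rcases not_and_or.mp (Set.mem_Icc.not.mp ht) with h | h <;> push_neg at h
  · rw [abs_sub_comm]; exact le_trans (by linarith) (le_abs_self _)
  · exact le_trans (by linarith) (le_abs_self _)

lemma tent_orth {r a b : ℝ} (hab : 2 * r ≤ |a - b|) (t : ℝ) :
    conj (tent r a t) * tent r b t = 0 := by
  rcases le_or_gt r |t - a| with h | h
  · rw [tent_eq_zero h]; simp
  · have hb : r ≤ |t - b| := by
      have h1 : |a - b| ≤ |a - t| + |t - b| := abs_sub_le a t b
      have h2 : |a - t| = |t - a| := abs_sub_comm a t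
      linarith
    rw [tent_eq_zero hb]; simp

lemma tent_sq_pos (r : ℝ) (hr : 0 < r) :
    (∫ t : ℝ, conj (tent r 0 t) * tent r 0 t) ≠ 0 := by
  have hfun : ∀ t : ℝ, conj (tent r 0 t) * tent r 0 t
      = ((max 0 (r - |t - 0|) * max 0 (r - |t - 0|) : ℝ) : ℂ) := by
    intro t; simp [tent, Complex.conj_ofReal]
  have hreal : (∫ t : ℝ, conj (tent r 0 t) * tent r 0 t)
      = ((∫ t : ℝ, max 0 (r - |t - 0|) * max 0 (r - |t - 0|) : ℝ) : ℂ) := by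
    simp_rw [hfun]; exact integral_ofReal
  rw [hreal]
  rw [Complex.ofReal_ne_zero]
  have hpos : 0 < ∫ t : ℝ, max 0 (r - |t - 0|) * max 0 (r - |t - 0|) := by
    rw [MeasureTheory.integral_pos_iff_support_of_nonneg]
    · have hsub : Set.Ioo (-r) r ⊆ Function.support
          (fun t => max 0 (r - |t - 0|) * max 0 (r - |t - 0|)) := by
        intro t ht
        have habs : |t - 0| < r := by
          rw [sub_zero, abs_lt]; exact ⟨ht.1, ht.2⟩
        have hmax : 0 < max 0 (r - |t - 0|) := lt_max_of_lt_right (by linarith)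
        exact (mul_pos hmax hmax).ne'
      calc (0 : ENNReal) < ENNReal.ofReal (r - (-r)) := by
            rw [ENNReal.ofReal_pos]; linarith
        _ = volume (Set.Ioo (-r) r) := (Real.volume_Ioo).symm
        _ ≤ _ := measure_mono hsub
    · intro t
      exact mul_nonneg (le_max_left _ _) (le_max_left _ _)
    · apply Continuous.integrable_of_hasCompactSupport
      · fun_prop
      · apply HasCompactSupport.mul_left
        apply HasCompactSupport.intro (isCompact_Icc (a := (0:ℝ) - r) (b := 0 + r))
        intro t ht
        have : tent r 0 t = 0 := by
          apply tent_eq_zero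
          rcases not_and_or.mp (Set.mem_Icc.not.mp ht) with h | h <;> push_neg at h
          · rw [abs_sub_comm]; exact le_trans (by linarith) (le_abs_self _)
          · exact le_trans (by linarith) (le_abs_self _)
        simpa [tent, Complex.ofReal_eq_zero] using this
  exact hpos.ne'

/-- Key non-Markovianity witness: for distinct delays there are test functions
whose pairing vanishes but whose shifted pairing does not. -/
lemma key_witness (τ1 τ2 : ℝ) (h : τ1 ≠ τ2) :
    ∃ f g : ℝ → ℂ, Continuous f ∧ HasCompactSupport f ∧ Continuous g ∧
      HasCompactSupport g ∧ pairL2 f g = 0 ∧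
      (∫ t : ℝ, conj (f (t + τ1)) * g (t + τ2)) ≠ 0 := by
  set Δ : ℝ := τ2 - τ1 with hΔdef
  have hΔ : Δ ≠ 0 := sub_ne_zero.mpr (Ne.symm h)
  set r : ℝ := |Δ| / 2 with hrdef
  have hr : 0 < r := by
    have := abs_pos.mpr hΔ; rw [hrdef]; linarith
  refine ⟨tent r 0, tent r Δ, tent_continuous r 0, tent_compactSupport r 0,
    tent_continuous r Δ, tent_compactSupport r Δ, ?_, ?_⟩
  · unfold pairL2
    have : ∀ t : ℝ, conj (tent r 0 t) * tent r Δ t = 0 := by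
      intro t
      apply tent_orth
      rw [zero_sub, abs_neg, hrdef]; linarith
    simp_rw [this]
    exact integral_zero ℝ ℂ
  · have heq : ∀ t : ℝ, tent r Δ (t + τ2) = tent r 0 (t + τ1) := by
      intro t
      have h' : t + τ2 - Δ = t + τ1 - 0 := by rw [hΔdef]; ring
      simp only [tent, h']
    simp_rw [heq]
    rw [MeasureTheory.integral_add_right_eq_self (fun s => conj (tent r 0 s) * tent r 0 s) τ1]
    exact tent_sq_pos r hr

/-- Proposition 2: for atoms coupled to an infinite waveguide at pairwise distinct
positions, all the noise commutators are Markovian iff `N = 1`, or `N = 2` with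
`γ_{1R}γ_{2R} = 0` and `γ_{1L}γ_{2L} = 0`. -/
theorem stmt_5 (N : ℕ) (hN : 0 < N) (τ γR γL : Fin N → ℝ)
    (hτdist : Function.Injective τ)
    (hγR : ∀ j, 0 ≤ γR j) (hγL : ∀ j, 0 ≤ γL j)
    (hnz : ∀ j, 0 < γR j + γL j) :
    (∀ j l : Fin N, ∃ κ κ' : ℂ,
        ∀ f g : ℝ → ℂ, Continuous f → HasCompactSupport f →
          Continuous g → HasCompactSupport g →
            pairL2 (Cchan (γR j) (τ j) f) (Cchan (γR l) (τ l) g) = κ * pairL2 f g ∧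
            pairL2 (Dchan (γL j) (τ j) f) (Dchan (γL l) (τ l) g) = κ' * pairL2 f g)
      ↔ (N = 1 ∨ (N = 2 ∧ ∀ h1 : 1 < N,
            γR ⟨0, hN⟩ * γR ⟨1, h1⟩ = 0 ∧ γL ⟨0, hN⟩ * γL ⟨1, h1⟩ = 0)) := by
  constructor
  · intro hP
    -- Derive the pairwise condition.
    have hQ : ∀ j l : Fin N, j ≠ l → γR j * γR l = 0 ∧ γL j * γL l = 0 := by
      intro j l hjl
      obtain ⟨κ, κ', hk⟩ := hP j l
      have hτ : τ j ≠ τ l := fun hh => hjl (hτdist hh)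
      constructor
      · by_contra hR
        have hj : 0 < γR j := lt_of_le_of_ne (hγR j)
          (fun hh => hR (by rw [← hh, zero_mul]))
        have hl : 0 < γR l := lt_of_le_of_ne (hγR l)
          (fun hh => hR (by rw [← hh, mul_zero]))
        obtain ⟨f, g, cf, sf, cg, sg, hfg0, hint⟩ := key_witness (τ j) (τ l) hτ
        have := (hk f g cf sf cg sg).1
        rw [pairC_eq, hfg0, mul_zero] at this
        rcases mul_eq_zero.mp this with h0 | h0
        · rw [Complex.ofReal_eq_zero] at h0
          have := mul_pos (Real.sqrt_pos.mpr hj) (Real.sqrt_pos.mpr hl)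
          exact this.ne' h0
        · exact hint h0
      · by_contra hL
        have hj : 0 < γL j := lt_of_le_of_ne (hγL j)
          (fun hh => hL (by rw [← hh, zero_mul]))
        have hl : 0 < γL l := lt_of_le_of_ne (hγL l)
          (fun hh => hL (by rw [← hh, mul_zero]))
        have hτ' : -(τ j) ≠ -(τ l) := fun hh => hτ (neg_injective hh)
        obtain ⟨f, g, cf, sf, cg, sg, hfg0, hint⟩ := key_witness (-(τ j)) (-(τ l)) hτ'
        have := (hk f g cf sf cg sg).2
        rw [Dchan_eq_Cchan, Dchan_eq_Cchan, pairC_eq, hfg0, mul_zero] at this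
        rcases mul_eq_zero.mp this with h0 | h0
        · rw [Complex.ofReal_eq_zero] at h0
          have := mul_pos (Real.sqrt_pos.mpr hj) (Real.sqrt_pos.mpr hl)
          exact this.ne' h0
        · exact hint h0
    rcases lt_or_ge N 3 with h3 | h3
    · interval_cases N
      · exact Or.inl rfl
      · exact Or.inr ⟨rfl, fun h1 => hQ ⟨0, hN⟩ ⟨1, h1⟩
          (Fin.ne_of_val_ne (by norm_num))⟩
    · exfalso
      have e : ∀ j : Fin N, 0 < γR j ∨ 0 < γL j := by
        intro j
        rcases (hγR j).lt_or_eq with hh | hh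
        · exact Or.inl hh
        · right; have := hnz j; linarith
      set j0 : Fin N := ⟨0, by omega⟩ with hj0
      set j1 : Fin N := ⟨1, by omega⟩ with hj1
      set j2 : Fin N := ⟨2, by omega⟩ with hj2
      have hne01 : j0 ≠ j1 := Fin.ne_of_val_ne (by norm_num)
      have hne02 : j0 ≠ j2 := Fin.ne_of_val_ne (by norm_num)
      have hne12 : j1 ≠ j2 := Fin.ne_of_val_ne (by norm_num)
      rcases e j0 with h0 | h0 <;> rcases e j1 with h1 | h1 <;> rcases e j2 with h2 | h2
      · exact (mul_pos h0 h1).ne' (hQ j0 j1 hne01).1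
      · exact (mul_pos h0 h1).ne' (hQ j0 j1 hne01).1
      · exact (mul_pos h0 h2).ne' (hQ j0 j2 hne02).1
      · exact (mul_pos h1 h2).ne' (hQ j1 j2 hne12).2
      · exact (mul_pos h1 h2).ne' (hQ j1 j2 hne12).1
      · exact (mul_pos h0 h2).ne' (hQ j0 j2 hne02).2
      · exact (mul_pos h0 h1).ne' (hQ j0 j1 hne01).2
      · exact (mul_pos h0 h1).ne' (hQ j0 j1 hne01).2
  · intro hR
    have hQ : ∀ j l : Fin N, j ≠ l → γR j * γR l = 0 ∧ γL j * γL l = 0 := by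
      rcases hR with h1 | ⟨h2, hγ⟩
      · subst h1
        intro j l hjl
        exact absurd (Subsingleton.elim j l) hjl
      · subst h2
        obtain ⟨hRR, hLL⟩ := hγ (by norm_num)
        intro j l hjl
        fin_cases j <;> fin_cases l <;> simp_all <;> tauto
    intro j l
    by_cases hjl : j = l
    · subst hjl
      exact ⟨(γR j : ℂ), (γL j : ℂ), fun f g cf sf cg sg =>
        ⟨pairC_diag _ _ (hγR j) f g, by
          rw [Dchan_eq_Cchan, Dchan_eq_Cchan]; exact pairC_diag _ _ (hγL j) f g⟩⟩
    · obtain ⟨hRR, hLL⟩ := hQ j l hjl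
      refine ⟨0, 0, fun f g _ _ _ _ => ⟨?_, ?_⟩⟩
      · rw [zero_mul]
        exact pairC_zero _ _ _ _ (mul_eq_zero.mp hRR) f g
      · rw [zero_mul, Dchan_eq_Cchan, Dchan_eq_Cchan]
        exact pairC_zero _ _ _ _ (mul_eq_zero.mp hLL) f g
end

section
/- Let N ≥ 1, let τ_1, ..., τ_N > 0 be real delays (not necessarily distinct), and let γ_{jR}, γ_{jL} ≥ 0 for j ∈ {1,...,N}. Set T_j = T[γ_{jR},γ_{jL},τ_j]. Suppose (a) γ_{jL}·γ_{lR} = 0 for all j, l ∈ {1,...,N}, and (b) τ_j = τ_l for all j ≠ l such that γ_{jR}·γ_{lR} ≠ 0 or γ_{jL}·γ_{lL} ≠ 0. Then for every pair j, l there exists κ_{jl} ∈ ℝ such that ⟨T_j f, T_l g⟩ = κ_{jl}·⟨f,g⟩ for all continuous compactly supported f, g : ℝ → ℂ. (This is the paper's Proposition 3: the quantum stochastic dynamics for semi-infinite waveguide-QED reduces to the Markovian case under these coupling and position conditions.) -/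
open MeasureTheory ComplexConjugate

/-!
Expanding the pairing gives four pairings of translates of `f` and `g`, weighted by products
`√γ · √γ'`. Condition (a) kills the two cross terms, and by (b) each surviving diagonal term
translates `f` and `g` by the same amount, so translation invariance of Lebesgue measure turns
it into `⟨f, g⟩`. Hence `κ_{jl} = √γ_{jR} √γ_{lR} + √γ_{jL} √γ_{lL}`.
-/

lemma integrable_conj_comp_add_mul_comp_add {f g : ℝ → ℂ} (hf : Continuous f)
    (hfs : HasCompactSupport f) (hg : Continuous g) (a b : ℝ) :
    Integrable fun t => conj (f (t + a)) * g (t + b) := by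
  have hfa : HasCompactSupport fun t => conj (f (t + a)) :=
    (hfs.comp_homeomorph (Homeomorph.addRight a)).comp_left (map_zero _)
  exact Continuous.integrable_of_hasCompactSupport (by fun_prop) hfa.mul_right

lemma pairL2_comp_add_right (f g : ℝ → ℂ) (a : ℝ) :
    pairL2 (fun t => f (t + a)) (fun t => g (t + a)) = pairL2 f g :=
  integral_add_right_eq_self (fun t => conj (f t) * g t) a

lemma mul_pairL2_comp_add_right {c a b : ℝ} (h : c = 0 ∨ a = b) (f g : ℝ → ℂ) :
    (c : ℂ) * pairL2 (fun t => f (t + a)) (fun t => g (t + b)) = c * pairL2 f g := by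
  rcases h with rfl | rfl
  · simp
  · rw [pairL2_comp_add_right]

lemma pairL2_Tchan_Tchan {f g : ℝ → ℂ} (hf : Continuous f) (hfs : HasCompactSupport f)
    (hg : Continuous g) (γR γL τ γR' γL' τ' : ℝ) :
    pairL2 (Tchan γR γL τ f) (Tchan γR' γL' τ' g) =
      ((√γR * √γR' : ℝ) : ℂ) * pairL2 (fun t => f (t + τ)) (fun t => g (t + τ'))
      - ((√γR * √γL' : ℝ) : ℂ) * pairL2 (fun t => f (t + τ)) (fun t => g (t + -τ'))
      - ((√γL * √γR' : ℝ) : ℂ) * pairL2 (fun t => f (t + -τ)) (fun t => g (t + τ'))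
      + ((√γL * √γL' : ℝ) : ℂ) * pairL2 (fun t => f (t + -τ)) (fun t => g (t + -τ')) := by
  have hint := integrable_conj_comp_add_mul_comp_add hf hfs hg
  have hpp := hint τ τ'
  have hpm : Integrable fun t => conj (f (t + τ)) * g (t - τ') := by
    simpa only [sub_eq_add_neg] using hint τ (-τ')
  have hmp : Integrable fun t => conj (f (t - τ)) * g (t + τ') := by
    simpa only [sub_eq_add_neg] using hint (-τ) τ'
  have hmm : Integrable fun t => conj (f (t - τ)) * g (t - τ') := by
    simpa only [sub_eq_add_neg] using hint (-τ) (-τ')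
  simp only [pairL2, Tchan, ← sub_eq_add_neg]
  rw [← integral_const_mul, ← integral_const_mul, ← integral_const_mul, ← integral_const_mul,
    ← integral_sub, ← integral_sub, ← integral_add]
  · congr 1
    funext t
    simp only [map_sub, map_mul, Complex.conj_ofReal]
    push_cast
    ring
  all_goals fun_prop

lemma sqrt_mul_sqrt_eq_zero {x y : ℝ} (h : x * y = 0) : √x * √y = 0 := by
  rcases mul_eq_zero.1 h with h | h <;> simp [h]

theorem stmt_6_general (N : ℕ) (τ γR γL : Fin N → ℝ)
    (ha : ∀ j l : Fin N, γL j * γR l = 0)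
    (hb : ∀ j l : Fin N, j ≠ l → (γR j * γR l ≠ 0 ∨ γL j * γL l ≠ 0) → τ j = τ l) :
    ∀ j l : Fin N, ∃ κ : ℝ,
      ∀ f g : ℝ → ℂ, Continuous f → HasCompactSupport f →
        Continuous g → HasCompactSupport g →
          pairL2 (Tchan (γR j) (γL j) (τ j) f) (Tchan (γR l) (γL l) (τ l) g) =
            (κ : ℂ) * pairL2 f g := by
  intro j l
  have hdiag : ∀ x : Fin N → ℝ, (j ≠ l → x j * x l ≠ 0 → τ j = τ l) →
      √(x j) * √(x l) = 0 ∨ τ j = τ l := by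
    intro x hx
    rcases eq_or_ne j l with rfl | hjl
    · exact .inr rfl
    by_cases hxx : x j * x l = 0
    · exact .inl (sqrt_mul_sqrt_eq_zero hxx)
    · exact .inr (hx hjl hxx)
  have hR := hdiag γR fun hjl h => hb j l hjl (.inl h)
  have hL := hdiag γL fun hjl h => hb j l hjl (.inr h)
  have hRL : √(γR j) * √(γL l) = 0 := sqrt_mul_sqrt_eq_zero ((mul_comm _ _).trans (ha l j))
  have hLR : √(γL j) * √(γR l) = 0 := sqrt_mul_sqrt_eq_zero (ha j l)
  refine ⟨√(γR j) * √(γR l) + √(γL j) * √(γL l), fun f g hf hfs hg _ => ?_⟩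
  rw [pairL2_Tchan_Tchan hf hfs hg, mul_pairL2_comp_add_right hR,
    mul_pairL2_comp_add_right (hL.imp_right neg_inj.2), hRL, hLR]
  push_cast
  ring

/-- Proposition 3: the quantum stochastic dynamics for semi-infinite waveguide-QED
reduces to the Markovian case when `γ_{jL}γ_{lR} = 0` for all `j, l`, and `τ_j = τ_l`
for all `j ≠ l` with `γ_{jR}γ_{lR} ≠ 0` or `γ_{jL}γ_{lL} ≠ 0`. -/
theorem stmt_6 (N : ℕ) (hN : 1 ≤ N) (τ γR γL : Fin N → ℝ)
    (hτpos : ∀ j, 0 < τ j)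
    (hγR : ∀ j, 0 ≤ γR j) (hγL : ∀ j, 0 ≤ γL j)
    (ha : ∀ j l : Fin N, γL j * γR l = 0)
    (hb : ∀ j l : Fin N, j ≠ l → (γR j * γR l ≠ 0 ∨ γL j * γL l ≠ 0) → τ j = τ l) :
    ∀ j l : Fin N, ∃ κ : ℝ,
      ∀ f g : ℝ → ℂ, Continuous f → HasCompactSupport f →
        Continuous g → HasCompactSupport g →
          pairL2 (Tchan (γR j) (γL j) (τ j) f) (Tchan (γR l) (γL l) (τ l) g) =
            (κ : ℂ) * pairL2 f g :=
  stmt_6_general N τ γR γL ha hb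
end

section
/- Let γR, γL ≥ 0, τ > 0, t ∈ ℝ, and 0 < Δt < 2τ. Let 1_I denote the indicator function of the interval I = [t, t+Δt], and set T = T[γR,γL,τ]. Then ⟨T 1_I, T 1_I⟩ = (γR + γL)·Δt. (This is the rigorous form of the diagonal case of the paper's Theorem 1: for a single delayed noise channel of a semi-infinite waveguide, the non-Markovian Itô product dB_in^{(j)}(t)·dB_in^{(j)†}(t) = ∫_t^{t+dt}∫_t^{t+dt}[b_in^{(j)}(s), b_in^{(j)†}(μ)] ds dμ equals (γ_{jL}+γ_{jR})·dt when dt < z_j/c.) -/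
/-!
When the two translates `f (· + τ)` and `f (· - τ)` have disjoint supports, the cross terms of
`conj (T f) * T f` vanish pointwise, so `⟨T f, T f⟩ = γR ⟨f, f⟩ + γL ⟨f, f⟩` by translation
invariance of Lebesgue measure. For the indicator of an interval of length `Δt` this disjointness
is exactly `Δt < 2τ`, and `⟨1_I, 1_I⟩ = Δt`.
-/

open MeasureTheory ComplexConjugate

theorem conj_Tchan_mul_self {γR γL τ : ℝ} (hγR : 0 ≤ γR) (hγL : 0 ≤ γL) {f : ℝ → ℂ} {s : ℝ}
    (hf : f (s + τ) = 0 ∨ f (s - τ) = 0) :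
    conj (Tchan γR γL τ f s) * Tchan γR γL τ f s =
      γR * (conj (f (s + τ)) * f (s + τ)) + γL * (conj (f (s - τ)) * f (s - τ)) := by
  have hsq : ∀ γ : ℝ, 0 ≤ γ → ((√γ : ℝ) : ℂ) * (√γ : ℂ) = γ := fun γ hγ => by
    rw [← Complex.ofReal_mul, Real.mul_self_sqrt hγ]
  rcases hf with h | h
  · simp only [Tchan, h, map_sub, map_mul, Complex.conj_ofReal, map_zero]
    linear_combination (conj (f (s - τ)) * f (s - τ)) * hsq γL hγL
  · simp only [Tchan, h, map_sub, map_mul, Complex.conj_ofReal, map_zero]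
    linear_combination (conj (f (s + τ)) * f (s + τ)) * hsq γR hγR

theorem integral_mul_add_right_add_mul_sub_right {g : ℝ → ℂ} (hg : Integrable g)
    (a b : ℂ) (τ : ℝ) :
    ∫ s, (a * g (s + τ) + b * g (s - τ)) = (a + b) * ∫ s, g s := by
  rw [integral_add ((hg.comp_add_right τ).const_mul _) ((hg.comp_sub_right τ).const_mul _),
    integral_const_mul, integral_const_mul, integral_add_right_eq_self g τ,
    integral_sub_right_eq_self g τ, add_mul]

theorem pairL2_Tchan_self {γR γL τ : ℝ} (hγR : 0 ≤ γR) (hγL : 0 ≤ γL) {f : ℝ → ℂ}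
    (hf : Integrable fun s => conj (f s) * f s) (hsupp : ∀ s, f (s + τ) = 0 ∨ f (s - τ) = 0) :
    pairL2 (Tchan γR γL τ f) (Tchan γR γL τ f) = (γR + γL) * pairL2 f f :=
  (integral_congr_ae (.of_forall fun _ => conj_Tchan_mul_self hγR hγL (hsupp _))).trans
    (integral_mul_add_right_add_mul_sub_right hf _ _ τ)

theorem indicator_Icc_add_eq_zero_or_sub_eq_zero {M : Type*} [Zero M] {a b τ : ℝ}
    (h : b - a < 2 * τ) (g : ℝ → M) (s : ℝ) :
    (Set.Icc a b).indicator g (s + τ) = 0 ∨ (Set.Icc a b).indicator g (s - τ) = 0 := by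
  by_contra! hne
  obtain ⟨-, hsb⟩ := Set.mem_of_indicator_ne_zero hne.1
  obtain ⟨has, -⟩ := Set.mem_of_indicator_ne_zero hne.2
  linarith

theorem conj_indicator_one_mul_self (s : Set ℝ) :
    (fun x => conj (s.indicator (fun _ => (1 : ℂ)) x) * s.indicator (fun _ => (1 : ℂ)) x) =
      s.indicator fun _ => 1 := by
  ext x
  by_cases hx : x ∈ s <;> simp [hx]

theorem pairL2_indicator_one_Icc {a b : ℝ} (hab : a ≤ b) :
    pairL2 ((Set.Icc a b).indicator fun _ => (1 : ℂ)) ((Set.Icc a b).indicator fun _ => 1) =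
      ((b - a : ℝ) : ℂ) := by
  rw [pairL2, conj_indicator_one_mul_self, integral_indicator_const _ measurableSet_Icc]
  simp [sub_nonneg.mpr hab]

theorem integrable_conj_indicator_one_Icc_mul_self (a b : ℝ) :
    Integrable fun x =>
      conj ((Set.Icc a b).indicator (fun _ => (1 : ℂ)) x) *
        (Set.Icc a b).indicator (fun _ => 1) x := by
  rw [conj_indicator_one_mul_self, integrable_indicator_iff measurableSet_Icc]
  exact integrableOn_const (by simp [Real.volume_Icc])

theorem stmt_7_general (γR γL : ℝ) (hγR : 0 ≤ γR) (hγL : 0 ≤ γL)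
    (τ t Δt : ℝ) (hΔt : 0 < Δt) (hΔτ : Δt < 2 * τ) :
    pairL2 (Tchan γR γL τ (Set.indicator (Set.Icc t (t + Δt)) fun _ => (1 : ℂ)))
           (Tchan γR γL τ (Set.indicator (Set.Icc t (t + Δt)) fun _ => (1 : ℂ))) =
      (((γR + γL) * Δt : ℝ) : ℂ) := by
  have hlen : t + Δt - t < 2 * τ := by linarith
  rw [pairL2_Tchan_self hγR hγL (integrable_conj_indicator_one_Icc_mul_self _ _)
      (indicator_Icc_add_eq_zero_or_sub_eq_zero hlen _),
    pairL2_indicator_one_Icc (by linarith)]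
  push_cast
  ring

/-- Diagonal case of Theorem 1 (non-Markovian Itô rule, semi-infinite waveguide):
for `0 < Δt < 2τ`, pairing a single delayed channel against the indicator of
`[t, t+Δt]` gives `(γR + γL)·Δt`. -/
theorem stmt_7 (γR γL : ℝ) (hγR : 0 ≤ γR) (hγL : 0 ≤ γL)
    (τ t Δt : ℝ) (hτ : 0 < τ) (hΔt : 0 < Δt) (hΔτ : Δt < 2 * τ) :
    pairL2 (Tchan γR γL τ (Set.indicator (Set.Icc t (t + Δt)) fun _ => (1 : ℂ)))
           (Tchan γR γL τ (Set.indicator (Set.Icc t (t + Δt)) fun _ => (1 : ℂ))) =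
      (((γR + γL) * Δt : ℝ) : ℂ) :=
  stmt_7_general γR γL hγR hγL τ t Δt hΔt hΔτ
end

section
/- Let γ_{jR}, γ_{jL}, γ_{lR}, γ_{lL} ≥ 0, let τ_j, τ_l > 0, let t ∈ ℝ and 0 < Δt < τ_j + τ_l. Let 1_I be the indicator function of I = [t, t+Δt], and set T_j = T[γ_{jR},γ_{jL},τ_j], T_l = T[γ_{lR},γ_{lL},τ_l]. Then ⟨T_j 1_I, T_l 1_I⟩ = (√(γ_{jL}γ_{lL}) + √(γ_{jR}γ_{lR}))·max(Δt − |τ_j − τ_l|, 0). In particular it equals 0 when |τ_j − τ_l| > Δt, and equals (√(γ_{jL}γ_{lL}) + √(γ_{jR}γ_{lR}))·Δt when τ_j = τ_l. (This is the rigorous form of the off-diagonal cases of the paper's Theorem 1, the non-Markovian Itô rule dB_in^{(j)}(t)·dB_in^{(l)†}(t) for distinct channels of a semi-infinite waveguide.) -/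
open MeasureTheory ComplexConjugate

/-!
Expanding both channels, `⟨T_j f, T_l f⟩` is a combination of the four overlaps
`∫ conj f(s + a) · f(s + b) ds` with `a = ±τ_j`, `b = ±τ_l`. For `f = 1_{[t, t+Δt]}` such an
overlap is the length `max (Δt - |a - b|) 0` of the intersection of two translates of the
interval. The mixed terms have `|a - b| = τ_j + τ_l > Δt` and vanish; the two remaining ones
have `|a - b| = |τ_j - τ_l|`.
-/

noncomputable def shiftOverlap (f : ℝ → ℂ) (a b : ℝ) : ℂ :=
  ∫ s : ℝ, conj (f (s + a)) * f (s + b)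

theorem pairL2_Tchan (f : ℝ → ℂ)
    (hf : ∀ a b : ℝ, Integrable fun s => conj (f (s + a)) * f (s + b))
    (γjR γjL τj γlR γlL τl : ℝ) :
    pairL2 (Tchan γjR γjL τj f) (Tchan γlR γlL τl f) =
      (Real.sqrt γjR * Real.sqrt γlR : ℝ) * shiftOverlap f τj τl
        - (Real.sqrt γjR * Real.sqrt γlL : ℝ) * shiftOverlap f τj (-τl)
        - (Real.sqrt γjL * Real.sqrt γlR : ℝ) * shiftOverlap f (-τj) τl
        + (Real.sqrt γjL * Real.sqrt γlL : ℝ) * shiftOverlap f (-τj) (-τl) := by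
  have hexpand : ∀ s : ℝ, conj (Tchan γjR γjL τj f s) * Tchan γlR γlL τl f s =
      (Real.sqrt γjR * Real.sqrt γlR : ℝ) * (conj (f (s + τj)) * f (s + τl))
        - (Real.sqrt γjR * Real.sqrt γlL : ℝ) * (conj (f (s + τj)) * f (s + -τl))
        - (Real.sqrt γjL * Real.sqrt γlR : ℝ) * (conj (f (s + -τj)) * f (s + τl))
        + (Real.sqrt γjL * Real.sqrt γlL : ℝ) * (conj (f (s + -τj)) * f (s + -τl)) := by
    intro s
    simp only [Tchan, map_sub, map_mul, Complex.conj_ofReal, ← sub_eq_add_neg]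
    push_cast
    ring
  simp only [pairL2, shiftOverlap, hexpand]
  rw [integral_add, integral_sub, integral_sub, integral_const_mul, integral_const_mul,
    integral_const_mul, integral_const_mul]
  all_goals fun_prop (disch := exact hf _ _)

theorem indicator_Icc_one_add (t u a s : ℝ) :
    Set.indicator (Set.Icc t u) (fun _ => (1 : ℂ)) (s + a) =
      Set.indicator (Set.Icc (t - a) (u - a)) (fun _ => (1 : ℂ)) s := by
  simp only [Set.indicator_apply, Set.mem_Icc, le_sub_iff_add_le, sub_le_iff_le_add]

theorem conj_indicator_Icc_mul_indicator_Icc (t u a b s : ℝ) :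
    conj (Set.indicator (Set.Icc t u) (fun _ => (1 : ℂ)) (s + a)) *
        Set.indicator (Set.Icc t u) (fun _ => (1 : ℂ)) (s + b) =
      Set.indicator (Set.Icc (max (t - a) (t - b)) (min (u - a) (u - b)))
        (fun _ => (1 : ℂ)) s := by
  rw [Set.indicator_apply, apply_ite conj, map_one, map_zero,
    ← Set.indicator_apply (f := fun _ => (1 : ℂ)),
    indicator_Icc_one_add, indicator_Icc_one_add, ← Set.inter_indicator_mul, Set.Icc_inter_Icc,
    one_mul]

theorem integrable_conj_indicator_Icc_mul (t u a b : ℝ) :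
    Integrable fun s : ℝ =>
      conj (Set.indicator (Set.Icc t u) (fun _ => (1 : ℂ)) (s + a)) *
        Set.indicator (Set.Icc t u) (fun _ => (1 : ℂ)) (s + b) := by
  simp only [conj_indicator_Icc_mul_indicator_Icc]
  exact (integrableOn_const measure_Icc_lt_top.ne).integrable_indicator measurableSet_Icc

theorem shiftOverlap_indicator_Icc (t Δt a b : ℝ) :
    shiftOverlap (Set.indicator (Set.Icc t (t + Δt)) fun _ => (1 : ℂ)) a b =
      ((max (Δt - |a - b|) 0 : ℝ) : ℂ) := by
  have hlength : min (t + Δt - a) (t + Δt - b) - max (t - a) (t - b) = Δt - |a - b| := by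
    rcases le_total a b with h | h
    · rw [abs_of_nonpos (by linarith), min_eq_right (by linarith), max_eq_left (by linarith)]
      ring
    · rw [abs_of_nonneg (by linarith), min_eq_left (by linarith), max_eq_right (by linarith)]
      ring
  simp only [shiftOverlap, conj_indicator_Icc_mul_indicator_Icc]
  rw [integral_indicator_const _ measurableSet_Icc, measureReal_def, Real.volume_Icc, hlength,
    ENNReal.toReal_ofReal', Complex.real_smul, mul_one]

theorem pairL2_Tchan_indicator_Icc {γjR γjL τj γlR γlL τl : ℝ} (hjR : 0 ≤ γjR) (hjL : 0 ≤ γjL)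
    (t : ℝ) {Δt : ℝ} (hΔτ : Δt ≤ τj + τl) :
    pairL2 (Tchan γjR γjL τj (Set.indicator (Set.Icc t (t + Δt)) fun _ => (1 : ℂ)))
        (Tchan γlR γlL τl (Set.indicator (Set.Icc t (t + Δt)) fun _ => (1 : ℂ))) =
      (((Real.sqrt (γjL * γlL) + Real.sqrt (γjR * γlR)) * max (Δt - |τj - τl|) 0 : ℝ) : ℂ) := by
  have hmixed : ∀ a b : ℝ, τj + τl ≤ |a - b| → max (Δt - |a - b|) 0 = 0 := fun a b h =>
    max_eq_right (by linarith)
  rw [pairL2_Tchan _ (integrable_conj_indicator_Icc_mul _ _), shiftOverlap_indicator_Icc,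
    shiftOverlap_indicator_Icc, shiftOverlap_indicator_Icc, shiftOverlap_indicator_Icc,
    hmixed τj (-τl) (by rw [sub_neg_eq_add]; exact le_abs_self _),
    hmixed (-τj) τl (by rw [← neg_add', abs_neg]; exact le_abs_self _),
    neg_sub_neg, abs_sub_comm τl, Real.sqrt_mul hjR, Real.sqrt_mul hjL]
  push_cast
  ring

theorem stmt_8_general (γjR γjL γlR γlL : ℝ)
    (hjR : 0 ≤ γjR) (hjL : 0 ≤ γjL)
    (τj τl : ℝ)
    (t Δt : ℝ) (hΔt : 0 < Δt) (hΔτ : Δt < τj + τl) :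
    pairL2 (Tchan γjR γjL τj (Set.indicator (Set.Icc t (t + Δt)) fun _ => (1 : ℂ)))
           (Tchan γlR γlL τl (Set.indicator (Set.Icc t (t + Δt)) fun _ => (1 : ℂ))) =
      (((Real.sqrt (γjL * γlL) + Real.sqrt (γjR * γlR)) * max (Δt - |τj - τl|) 0 : ℝ) : ℂ) ∧
    (|τj - τl| > Δt →
      pairL2 (Tchan γjR γjL τj (Set.indicator (Set.Icc t (t + Δt)) fun _ => (1 : ℂ)))
             (Tchan γlR γlL τl (Set.indicator (Set.Icc t (t + Δt)) fun _ => (1 : ℂ))) = 0) ∧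
    (τj = τl →
      pairL2 (Tchan γjR γjL τj (Set.indicator (Set.Icc t (t + Δt)) fun _ => (1 : ℂ)))
             (Tchan γlR γlL τl (Set.indicator (Set.Icc t (t + Δt)) fun _ => (1 : ℂ))) =
        (((Real.sqrt (γjL * γlL) + Real.sqrt (γjR * γlR)) * Δt : ℝ) : ℂ)) := by
  have hpair := pairL2_Tchan_indicator_Icc (γlR := γlR) (γlL := γlL) hjR hjL t hΔτ.le
  refine ⟨hpair, fun hfar => ?_, fun hsame => ?_⟩
  · rw [hpair, max_eq_right (by linarith), mul_zero, Complex.ofReal_zero]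
  · rw [hpair, hsame, sub_self, abs_zero, sub_zero, max_eq_left hΔt.le]

/-- Off-diagonal cases of Theorem 1 (non-Markovian Itô rule for distinct channels of a
semi-infinite waveguide): pairing two delayed channels against the indicator of
`[t, t+Δt]` gives `(√(γ_{jL}γ_{lL}) + √(γ_{jR}γ_{lR}))·max(Δt − |τ_j − τ_l|, 0)`;
in particular it vanishes when `|τ_j − τ_l| > Δt` and equals
`(√(γ_{jL}γ_{lL}) + √(γ_{jR}γ_{lR}))·Δt` when `τ_j = τ_l`. -/
theorem stmt_8 (γjR γjL γlR γlL : ℝ)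
    (hjR : 0 ≤ γjR) (hjL : 0 ≤ γjL) (hlR : 0 ≤ γlR) (hlL : 0 ≤ γlL)
    (τj τl : ℝ) (hτj : 0 < τj) (hτl : 0 < τl)
    (t Δt : ℝ) (hΔt : 0 < Δt) (hΔτ : Δt < τj + τl) :
    pairL2 (Tchan γjR γjL τj (Set.indicator (Set.Icc t (t + Δt)) fun _ => (1 : ℂ)))
           (Tchan γlR γlL τl (Set.indicator (Set.Icc t (t + Δt)) fun _ => (1 : ℂ))) =
      (((Real.sqrt (γjL * γlL) + Real.sqrt (γjR * γlR)) * max (Δt - |τj - τl|) 0 : ℝ) : ℂ) ∧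
    (|τj - τl| > Δt →
      pairL2 (Tchan γjR γjL τj (Set.indicator (Set.Icc t (t + Δt)) fun _ => (1 : ℂ)))
             (Tchan γlR γlL τl (Set.indicator (Set.Icc t (t + Δt)) fun _ => (1 : ℂ))) = 0) ∧
    (τj = τl →
      pairL2 (Tchan γjR γjL τj (Set.indicator (Set.Icc t (t + Δt)) fun _ => (1 : ℂ)))
             (Tchan γlR γlL τl (Set.indicator (Set.Icc t (t + Δt)) fun _ => (1 : ℂ))) =
        (((Real.sqrt (γjL * γlL) + Real.sqrt (γjR * γlR)) * Δt : ℝ) : ℂ)) :=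
  stmt_8_general γjR γjL γlR γlL hjR hjL τj τl t Δt hΔt hΔτ
end
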